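/- arXiv:1605.00158 — 3 statements merged into one kernel-verified Lean document; each statement's English description precedes it below -/
import Mathlib

section
/- Let 𝒞^l := {(a,b) ∈ ℝ^l × ℝ^l : a ≥ 0, b ≥ 0, ⟨a,b⟩ = 0} be the complementarity cone. For every (a,b) ∈ 𝒞^l, the limiting normal cone to 𝒞^l at (a,b) equals {(α,β) ∈ ℝ^l × ℝ^l : α_i = 0 for every i with a_i > 0; β_i = 0 for every i with b_i > 0; and for every i with a_i = b_i = 0, either (α_i < 0 and β_i < 0) or α_i β_i = 0}. -/
open scoped RealInnerProductSpace Pointwise ENNReal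
open Filter Topology MeasureTheory

noncomputable section

/-- `ℝ^n` with the Euclidean structure. -/
abbrev V (n : ℕ) : Type := EuclideanSpace ℝ (Fin n)

/-- The complementarity cone `𝒞^l = {(a,b) : a ≥ 0, b ≥ 0, ⟨a,b⟩ = 0}`. -/
def compCone (l : ℕ) : Set (V l × V l) :=
  {p | (∀ i, 0 ≤ p.1 i) ∧ (∀ i, 0 ≤ p.2 i) ∧ ⟪p.1, p.2⟫ = 0}

/-- Proximal normal cone in an inner product space. -/
def proxNormal {H : Type*} [NormedAddCommGroup H] [InnerProductSpace ℝ H]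
    (Ω : Set H) (z : H) : Set H :=
  {v | ∃ σ : ℝ, 0 ≤ σ ∧ ∀ y ∈ Ω, ⟪v, y - z⟫ ≤ σ * ‖y - z‖ ^ 2}

/-- Limiting (Mordukhovich) normal cone. -/
def limNormal {H : Type*} [NormedAddCommGroup H] [InnerProductSpace ℝ H]
    (Ω : Set H) (z : H) : Set H :=
  {v | ∃ zk vk : ℕ → H, (∀ k, zk k ∈ Ω ∧ vk k ∈ proxNormal Ω (zk k)) ∧
    Tendsto zk atTop (𝓝 z) ∧ Tendsto vk atTop (𝓝 v)}

/-- Clarke normal cone: closed convex hull of the limiting normal cone. -/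
def clarkeNormal {H : Type*} [NormedAddCommGroup H] [InnerProductSpace ℝ H]
    (Ω : Set H) (z : H) : Set H :=
  closure (convexHull ℝ (limNormal Ω z))

/-- Proximal normal cone on a product of inner product spaces (Euclidean/L² pairing). -/
def proxNormalP {H K : Type*} [NormedAddCommGroup H] [InnerProductSpace ℝ H]
    [NormedAddCommGroup K] [InnerProductSpace ℝ K]
    (Ω : Set (H × K)) (z : H × K) : Set (H × K) :=
  {v | ∃ σ : ℝ, 0 ≤ σ ∧ ∀ y ∈ Ω,
    ⟪v.1, y.1 - z.1⟫ + ⟪v.2, y.2 - z.2⟫ ≤ σ * (‖y.1 - z.1‖ ^ 2 + ‖y.2 - z.2‖ ^ 2)}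

/-- Limiting normal cone on a product of inner product spaces. -/
def limNormalP {H K : Type*} [NormedAddCommGroup H] [InnerProductSpace ℝ H]
    [NormedAddCommGroup K] [InnerProductSpace ℝ K]
    (Ω : Set (H × K)) (z : H × K) : Set (H × K) :=
  {v | ∃ zk vk : ℕ → H × K, (∀ k, zk k ∈ Ω ∧ vk k ∈ proxNormalP Ω (zk k)) ∧
    Tendsto zk atTop (𝓝 z) ∧ Tendsto vk atTop (𝓝 v)}

/-- Clarke normal cone on a product. -/
def clarkeNormalP {H K : Type*} [NormedAddCommGroup H] [InnerProductSpace ℝ H]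
    [NormedAddCommGroup K] [InnerProductSpace ℝ K]
    (Ω : Set (H × K)) (z : H × K) : Set (H × K) :=
  closure (convexHull ℝ (limNormalP Ω z))

/-- Limiting subdifferential in an inner product space. -/
def limSubdiff {H : Type*} [NormedAddCommGroup H] [InnerProductSpace ℝ H]
    (φ : H → ℝ) (z : H) : Set H :=
  {v | ∃ zk vk : ℕ → H, Tendsto zk atTop (𝓝 z) ∧ Tendsto vk atTop (𝓝 v) ∧
    ∀ k, 0 ≤ liminf (fun y =>
      (φ y - φ (zk k) - ⟪vk k, y - zk k⟫) / ‖y - zk k‖) (𝓝[≠] (zk k))}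

/-- Clarke subdifferential: closed convex hull of the limiting subdifferential. -/
def clarkeSubdiff {H : Type*} [NormedAddCommGroup H] [InnerProductSpace ℝ H]
    (φ : H → ℝ) (z : H) : Set H :=
  closure (convexHull ℝ (limSubdiff φ z))

/-- Limiting subdifferential on a product of inner product spaces (L² pairing). -/
def limSubdiffP {H K : Type*} [NormedAddCommGroup H] [InnerProductSpace ℝ H]
    [NormedAddCommGroup K] [InnerProductSpace ℝ K]
    (φ : H × K → ℝ) (z : H × K) : Set (H × K) :=
  {v | ∃ zk vk : ℕ → H × K, Tendsto zk atTop (𝓝 z) ∧ Tendsto vk atTop (𝓝 v) ∧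
    ∀ k, 0 ≤ liminf (fun y : H × K =>
      (φ y - φ (zk k) - (⟪(vk k).1, y.1 - (zk k).1⟫ + ⟪(vk k).2, y.2 - (zk k).2⟫)) /
        Real.sqrt (‖y.1 - (zk k).1‖ ^ 2 + ‖y.2 - (zk k).2‖ ^ 2)) (𝓝[≠] (zk k))}

/-- Clarke subdifferential on a product. -/
def clarkeSubdiffP {H K : Type*} [NormedAddCommGroup H] [InnerProductSpace ℝ H]
    [NormedAddCommGroup K] [InnerProductSpace ℝ K]
    (φ : H × K → ℝ) (z : H × K) : Set (H × K) :=
  closure (convexHull ℝ (limSubdiffP φ z))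

/-- Euclidean (L²) distance from a pair to a set of pairs. -/
def distP {H K : Type*} [NormedAddCommGroup H] [NormedAddCommGroup K]
    (p : H × K) (Ω : Set (H × K)) : ℝ :=
  sInf {d : ℝ | ∃ q ∈ Ω, d = Real.sqrt (‖p.1 - q.1‖ ^ 2 + ‖p.2 - q.2‖ ^ 2)}

/-- Gradient of a scalar function on a product, as the pair of partial gradients
(this is the Euclidean gradient of `φ` whenever `φ` is differentiable). -/
def grad2 {H K : Type*} [NormedAddCommGroup H] [InnerProductSpace ℝ H] [CompleteSpace H]
    [NormedAddCommGroup K] [InnerProductSpace ℝ K] [CompleteSpace K]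
    (φ : H × K → ℝ) (z : H × K) : H × K :=
  (gradient (fun x => φ (x, z.2)) z.1, gradient (fun u => φ (z.1, u)) z.2)

/-!
Both the cone and the proximal inequality split over coordinates, so `v` is a proximal normal
to `𝒞^l` at `z` exactly when each pair `(v.1 i, v.2 i)` is a proximal normal to the planar set
`{(y, w) : 0 ≤ y, 0 ≤ w, y w = 0}` at `(z.1 i, z.2 i)`: it vanishes in the coordinate where
`z` is positive, and is nonpositive in both coordinates at the corner `(0, 0)`. Limits of such
normals satisfy the stated conditions, because positivity of `a i` persists along the sequence
and `{(α, β) : (α < 0 ∧ β < 0) ∨ α β = 0}` is closed. Conversely, for `p` satisfying them, the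
points `(a + t p₂⁺, b + t p₁⁺)` lie in `𝒞^l`, tend to `(a, b)` as `t → 0⁺`, and have `p` as a
proximal normal.
-/

section

variable {l : ℕ}

theorem inner_eq_sum_mul (x y : V l) : ⟪x, y⟫ = ∑ i, x i * y i := by
  simp [PiLp.inner_apply, mul_comm]

theorem mem_compCone_iff {p : V l × V l} :
    p ∈ compCone l ↔ ∀ i, 0 ≤ p.1 i ∧ 0 ≤ p.2 i ∧ p.1 i * p.2 i = 0 := by
  refine ⟨fun ⟨h1, h2, h⟩ i => ⟨h1 i, h2 i, ?_⟩,
    fun h => ⟨fun i => (h i).1, fun i => (h i).2.1, ?_⟩⟩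
  · rw [inner_eq_sum_mul] at h
    exact (Finset.sum_eq_zero_iff_of_nonneg fun j _ => mul_nonneg (h1 j) (h2 j)).1 h i
      (Finset.mem_univ i)
  · rw [inner_eq_sum_mul]
    exact Finset.sum_eq_zero fun i _ => (h i).2.2

theorem preimage_swap_compCone : Prod.swap ⁻¹' compCone l = compCone l := by
  ext p
  simp only [Set.mem_preimage, mem_compCone_iff, Prod.fst_swap, Prod.snd_swap, mul_comm]
  exact forall_congr' fun i => by tauto

theorem swap_mem_proxNormalP {H K : Type*} [NormedAddCommGroup H] [InnerProductSpace ℝ H]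
    [NormedAddCommGroup K] [InnerProductSpace ℝ K] {Ω : Set (H × K)} {z v : H × K}
    (hv : v ∈ proxNormalP Ω z) : v.swap ∈ proxNormalP (Prod.swap ⁻¹' Ω) z.swap := by
  obtain ⟨σ, hσ, h⟩ := hv
  refine ⟨σ, hσ, fun y hy => ?_⟩
  simpa only [Prod.fst_swap, Prod.snd_swap, add_comm] using h y.swap hy

theorem nonpos_of_forall_mul_le_sq {x σ δ : ℝ} (hδ : 0 < δ)
    (h : ∀ s ∈ Set.Ioo 0 δ, s * x ≤ σ * s ^ 2) : x ≤ 0 := by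
  have hlim : Tendsto (fun s => σ * s) (𝓝[>] 0) (𝓝 0) := by
    simpa using (tendsto_nhdsWithin_of_tendsto_nhds (continuous_const_mul σ).continuousAt :
      Tendsto (fun s => σ * s) (𝓝[>] (0 : ℝ)) (𝓝 (σ * 0)))
  refine ge_of_tendsto hlim ?_
  filter_upwards [Ioo_mem_nhdsGT hδ] with s hs
  have := h s hs
  rw [sq, ← mul_assoc, mul_comm σ s, mul_assoc] at this
  exact le_of_mul_le_mul_left this hs.1

/-- The proximal normal cone of `{(y, w) : 0 ≤ y, 0 ≤ w, y * w = 0}` at its point `(c, d)`. -/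
def IsCompProxNormal (c d α β : ℝ) : Prop :=
  (0 < c → α = 0) ∧ (0 < d → β = 0) ∧ (d = 0 → α ≤ 0) ∧ (c = 0 → β ≤ 0)

theorem exists_mul_le_sq_of_mem_proxNormalP {z v : V l × V l} (hz : z ∈ compCone l)
    (hv : v ∈ proxNormalP (compCone l) z) (i : Fin l) :
    ∃ σ : ℝ, ∀ s, 0 ≤ z.1 i + s → s * z.2 i = 0 → s * v.1 i ≤ σ * s ^ 2 := by
  obtain ⟨σ, -, h⟩ := hv
  refine ⟨σ, fun s hs hsz => ?_⟩
  have hy : (z.1 + EuclideanSpace.single i s, z.2) ∈ compCone l := by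
    refine mem_compCone_iff.2 fun j => ?_
    obtain ⟨h1, h2, h12⟩ := mem_compCone_iff.1 hz j
    rcases eq_or_ne j i with rfl | hj
    · simp only [PiLp.add_apply, PiLp.single_apply, if_true]
      exact ⟨hs, h2, by linear_combination h12 + hsz⟩
    · simp only [PiLp.add_apply, PiLp.single_apply, hj, if_false, add_zero]
      exact ⟨h1, h2, h12⟩
  simpa [EuclideanSpace.inner_single_right, mul_comm] using h _ hy

theorem eq_zero_and_nonpos_of_forall_mul_le_sq {c d α σ : ℝ} (hc : 0 ≤ c) (hcd : c * d = 0)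
    (h : ∀ s, 0 ≤ c + s → s * d = 0 → s * α ≤ σ * s ^ 2) :
    (0 < c → α = 0) ∧ (d = 0 → α ≤ 0) := by
  have hnonpos : d = 0 → α ≤ 0 := fun hd =>
    nonpos_of_forall_mul_le_sq one_pos fun s hs => h s (by linarith [hs.1]) (by simp [hd])
  refine ⟨fun hc => ?_, hnonpos⟩
  have hd : d = 0 := (mul_eq_zero.1 hcd).resolve_left hc.ne'
  have : -α ≤ 0 := nonpos_of_forall_mul_le_sq hc fun s hs => by
    simpa using h (-s) (by linarith [hs.2]) (by simp [hd])
  linarith [hnonpos hd]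

theorem mul_le_abs_div_mul_of_mul_eq_zero {c β y w : ℝ} (hc : 0 < c) (hw : 0 ≤ w)
    (hyw : y * w = 0) : β * w ≤ |β| / (2 * c) * ((y - c) ^ 2 + w ^ 2) := by
  rcases mul_eq_zero.1 hyw with rfl | rfl
  · -- `2 c w ≤ c ^ 2 + w ^ 2`
    rw [div_mul_eq_mul_div, le_div_iff₀ (by positivity)]
    nlinarith [le_abs_self β, abs_nonneg β, mul_nonneg (abs_nonneg β) (sq_nonneg (c - w)),
      mul_nonneg (mul_nonneg hc.le hw) (sub_nonneg.2 (le_abs_self β))]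
  · simp only [mul_zero]
    positivity

theorem IsCompProxNormal.exists_le_mul {c d α β : ℝ} (h : IsCompProxNormal c d α β)
    (hc : 0 ≤ c) (hd : 0 ≤ d) (hcd : c * d = 0) :
    ∃ σ, 0 ≤ σ ∧ ∀ y w : ℝ, 0 ≤ y → 0 ≤ w → y * w = 0 →
      α * (y - c) + β * (w - d) ≤ σ * ((y - c) ^ 2 + (w - d) ^ 2) := by
  obtain ⟨hα, hβ, hα', hβ'⟩ := h
  rcases hc.lt_or_eq with hc | rfl
  · obtain rfl : d = 0 := (mul_eq_zero.1 hcd).resolve_left hc.ne'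
    refine ⟨|β| / (2 * c), by positivity, fun y w _ hw hyw => ?_⟩
    simpa [hα hc] using mul_le_abs_div_mul_of_mul_eq_zero (β := β) hc hw hyw
  rcases hd.lt_or_eq with hd | rfl
  · refine ⟨|α| / (2 * d), by positivity, fun y w hy _ hyw => ?_⟩
    have := mul_le_abs_div_mul_of_mul_eq_zero (β := α) hd hy (by rw [mul_comm, hyw])
    simp only [hβ hd, sub_zero, zero_mul, add_zero]
    linarith
  · refine ⟨0, le_rfl, fun y w hy hw _ => ?_⟩
    nlinarith [hα' rfl, hβ' rfl]

theorem mem_proxNormalP_compCone_of_forall_exists {z v : V l × V l}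
    (h : ∀ i, ∃ σ, 0 ≤ σ ∧ ∀ y w : ℝ, 0 ≤ y → 0 ≤ w → y * w = 0 →
      v.1 i * (y - z.1 i) + v.2 i * (w - z.2 i) ≤ σ * ((y - z.1 i) ^ 2 + (w - z.2 i) ^ 2)) :
    v ∈ proxNormalP (compCone l) z := by
  choose σ hσ hle using h
  refine ⟨∑ i, σ i, Finset.sum_nonneg fun i _ => hσ i, fun y hy => ?_⟩
  simp only [inner_eq_sum_mul, EuclideanSpace.real_norm_sq_eq, PiLp.sub_apply,
    ← Finset.sum_add_distrib, Finset.mul_sum]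
  refine Finset.sum_le_sum fun i _ => ?_
  obtain ⟨hy1, hy2, hy12⟩ := mem_compCone_iff.1 hy i
  calc _ ≤ σ i * ((y.1 i - z.1 i) ^ 2 + (y.2 i - z.2 i) ^ 2) := hle i _ _ hy1 hy2 hy12
    _ ≤ _ := mul_le_mul_of_nonneg_right
        (Finset.single_le_sum (fun j _ => hσ j) (Finset.mem_univ i)) (by positivity)

theorem mem_proxNormalP_compCone_iff {z v : V l × V l} (hz : z ∈ compCone l) :
    v ∈ proxNormalP (compCone l) z ↔
      ∀ i, IsCompProxNormal (z.1 i) (z.2 i) (v.1 i) (v.2 i) := by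
  refine ⟨fun hv i => ?_, fun h => mem_proxNormalP_compCone_of_forall_exists fun i => ?_⟩
  · obtain ⟨hc, hd, hcd⟩ := mem_compCone_iff.1 hz i
    obtain ⟨σ, hσ⟩ := exists_mul_le_sq_of_mem_proxNormalP hz hv i
    obtain ⟨τ, hτ⟩ := exists_mul_le_sq_of_mem_proxNormalP
      (z := z.swap) (by rwa [← preimage_swap_compCone] at hz)
      (by simpa only [preimage_swap_compCone] using swap_mem_proxNormalP hv) i
    obtain ⟨hα, hα'⟩ := eq_zero_and_nonpos_of_forall_mul_le_sq hc hcd hσ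
    obtain ⟨hβ, hβ'⟩ := eq_zero_and_nonpos_of_forall_mul_le_sq hd (by rwa [mul_comm]) hτ
    exact ⟨hα, hβ, hα', hβ'⟩
  · obtain ⟨hc, hd, hcd⟩ := mem_compCone_iff.1 hz i
    exact (h i).exists_le_mul hc hd hcd

theorem isCompProxNormal_add_mul_max {a b α β t : ℝ} (ha : 0 ≤ a) (hb : 0 ≤ b)
    (hab : a * b = 0) (hα : 0 < a → α = 0) (hβ : 0 < b → β = 0)
    (hαβ : a = 0 → b = 0 → (α < 0 ∧ β < 0) ∨ α * β = 0) (ht : 0 < t) :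
    (0 ≤ a + t * max β 0 ∧ 0 ≤ b + t * max α 0 ∧
      (a + t * max β 0) * (b + t * max α 0) = 0) ∧
    IsCompProxNormal (a + t * max β 0) (b + t * max α 0) α β := by
  have hfst : ∀ {a b α β : ℝ}, 0 ≤ a → 0 ≤ b → (0 < a → α = 0) → (0 < b → β = 0) →
      (a = 0 → b = 0 → (α < 0 ∧ β < 0) ∨ α * β = 0) →
      a * max α 0 = 0 ∧ (0 < a + t * max β 0 → α = 0) ∧ (b + t * max α 0 = 0 → α ≤ 0) := by
    intro a b α β ha hb hα hβ hαβ
    refine ⟨?_, fun hc => ?_, fun hd => ?_⟩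
    · rcases ha.lt_or_eq with ha | rfl
      · simp [hα ha]
      · exact zero_mul _
    · rcases ha.lt_or_eq with ha | rfl
      · exact hα ha
      have hβ0 : 0 < β := by
        by_contra! h
        simp [max_eq_right h] at hc
      have hb0 : b = 0 := by
        by_contra h
        exact hβ0.ne' (hβ (hb.lt_of_ne' h))
      rcases hαβ rfl hb0 with h | h
      · exact absurd h.2 hβ0.not_gt
      · exact (mul_eq_zero.1 h).resolve_right hβ0.ne'
    · have : t * max α 0 = 0 := by nlinarith [le_max_right α 0]
      simpa [ht.ne'] using this
  obtain ⟨h1, hα', hαle⟩ := hfst ha hb hα hβ hαβ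
  obtain ⟨h2, hβ', hβle⟩ := hfst hb ha hβ hα fun hb ha => by
    simpa only [and_comm, mul_comm] using hαβ ha hb
  have hsign : α ≤ 0 ∨ β ≤ 0 := by
    by_contra! h
    rcases ha.lt_or_eq with ha | rfl
    · exact h.1.ne' (hα ha)
    rcases hb.lt_or_eq with hb | rfl
    · exact h.2.ne' (hβ hb)
    rcases hαβ rfl rfl with h' | h'
    · exact h'.1.not_gt h.1
    · exact (mul_pos h.1 h.2).ne' h'
  have h12 : max β 0 * max α 0 = 0 := by
    rcases hsign with h | h <;> simp [max_eq_right h]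
  exact ⟨⟨by positivity, by positivity,
    by linear_combination hab + t * h1 + t * h2 + t ^ 2 * h12⟩, hα', hβ', hαle, hβle⟩

theorem neg_and_neg_or_mul_eq_zero_iff {α β : ℝ} :
    (α < 0 ∧ β < 0) ∨ α * β = 0 ↔ (α ≤ 0 ∧ β ≤ 0) ∨ α * β = 0 := by
  refine ⟨Or.imp_left fun h => ⟨h.1.le, h.2.le⟩, ?_⟩
  rintro (⟨hα, hβ⟩ | h)
  · rcases hα.lt_or_eq with hα | rfl
    · rcases hβ.lt_or_eq with hβ | rfl
      exacts [Or.inl ⟨hα, hβ⟩, Or.inr (mul_zero α)]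
    · exact Or.inr (zero_mul β)
  · exact Or.inr h

theorem IsCompProxNormal.neg_and_neg_or_mul_eq_zero {c d α β : ℝ} (h : IsCompProxNormal c d α β)
    (hc : 0 ≤ c) (hd : 0 ≤ d) : (α < 0 ∧ β < 0) ∨ α * β = 0 := by
  obtain ⟨hα, hβ, hα', hβ'⟩ := h
  rcases hc.lt_or_eq with hc | rfl
  · simp [hα hc]
  rcases hd.lt_or_eq with hd | rfl
  · simp [hβ hd]
  exact neg_and_neg_or_mul_eq_zero_iff.2 (Or.inl ⟨hα' rfl, hβ' rfl⟩)

theorem isClosed_setOf_neg_and_neg_or_mul_eq_zero :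
    IsClosed {q : ℝ × ℝ | (q.1 < 0 ∧ q.2 < 0) ∨ q.1 * q.2 = 0} := by
  simp_rw [neg_and_neg_or_mul_eq_zero_iff]
  exact ((isClosed_le continuous_fst continuous_const).inter
    (isClosed_le continuous_snd continuous_const)).union
    (isClosed_eq (continuous_fst.mul continuous_snd) continuous_const)

theorem eq_zero_of_tendsto_of_pos {c α : ℕ → ℝ} {a A : ℝ} (hc : Tendsto c atTop (𝓝 a))
    (hα : Tendsto α atTop (𝓝 A)) (ha : 0 < a) (h : ∀ k, 0 < c k → α k = 0) : A = 0 :=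
  tendsto_nhds_unique hα <| tendsto_const_nhds.congr' <|
    (hc.eventually (eventually_gt_nhds ha)).mono fun k hk => (h k hk).symm

theorem Filter.Tendsto.coord {ι : Type*} {f : Filter ι} {z : ι → V l × V l} {x : V l × V l}
    (h : Tendsto z f (𝓝 x)) (i : Fin l) :
    Tendsto (fun k => ((z k).1 i, (z k).2 i)) f (𝓝 (x.1 i, x.2 i)) :=
  ((by fun_prop : Continuous fun p : V l × V l => (p.1 i, p.2 i)).tendsto x).comp h

end

/-- Expression for the limiting normal cone of the complementarity
cone `𝒞^l` at any of its points. -/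
theorem limNormal_compCone (l : ℕ) (a b : V l) (hab : (a, b) ∈ compCone l) :
    limNormalP (compCone l) (a, b) =
      {p : V l × V l |
        (∀ i, 0 < a i → p.1 i = 0) ∧ (∀ i, 0 < b i → p.2 i = 0) ∧
        (∀ i, a i = 0 → b i = 0 → (p.1 i < 0 ∧ p.2 i < 0) ∨ p.1 i * p.2 i = 0)} := by
  ext p
  constructor
  · rintro ⟨z, v, hzv, hz, hv⟩
    have hN k i := (mem_proxNormalP_compCone_iff (hzv k).1).1 (hzv k).2 i
    have hnn k i := mem_compCone_iff.1 (hzv k).1 i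
    refine ⟨fun i ha => ?_, fun i hb => ?_, fun i _ _ => ?_⟩
    · exact eq_zero_of_tendsto_of_pos (hz.coord i).fst_nhds (hv.coord i).fst_nhds ha
        fun k => (hN k i).1
    · exact eq_zero_of_tendsto_of_pos (hz.coord i).snd_nhds (hv.coord i).snd_nhds hb
        fun k => (hN k i).2.1
    · exact isClosed_setOf_neg_and_neg_or_mul_eq_zero.mem_of_tendsto (hv.coord i)
        (Eventually.of_forall fun k =>
          (hN k i).neg_and_neg_or_mul_eq_zero (hnn k i).1 (hnn k i).2.1)
  · rintro ⟨hα, hβ, hαβ⟩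
    set w : V l × V l :=
      (WithLp.toLp 2 fun i => max (p.2 i) 0, WithLp.toLp 2 fun i => max (p.1 i) 0)
    have hmem (t : ℝ) (ht : 0 < t) :
        (a, b) + t • w ∈ compCone l ∧ p ∈ proxNormalP (compCone l) ((a, b) + t • w) := by
      have key i := isCompProxNormal_add_mul_max (mem_compCone_iff.1 hab i).1
        (mem_compCone_iff.1 hab i).2.1 (mem_compCone_iff.1 hab i).2.2 (hα i) (hβ i) (hαβ i) ht
      have hz : (a, b) + t • w ∈ compCone l :=
        mem_compCone_iff.2 fun i => by simpa [w] using (key i).1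
      exact ⟨hz, (mem_proxNormalP_compCone_iff hz).2 fun i => by simpa [w] using (key i).2⟩
    refine ⟨fun k => (a, b) + (1 / ((k : ℝ) + 1)) • w, fun _ => p,
      fun k => hmem _ (by positivity), ?_, tendsto_const_nhds⟩
    simpa using
      ((tendsto_one_div_add_atTop_nhds_zero_nat (𝕜 := ℝ)).smul_const w).const_add (a, b)
end
end

section
/- Let G, H : ℝ^d → ℝ^l be Fréchet differentiable at z̄ and suppose z̄ is feasible for the inequality reformulation of the complementarity system, i.e., G(z̄) ≥ 0, H(z̄) ≥ 0, and ⟨G(z̄), H(z̄)⟩ ≤ 0. Then ⟨G(z̄), H(z̄)⟩ = 0 and G_i(z̄)H_i(z̄) = 0 for every i, and there exists no direction d ∈ ℝ^d satisfying simultaneously: ⟨∇G_i(z̄), d⟩ > 0 for every i with G_i(z̄) = 0; ⟨∇H_i(z̄), d⟩ > 0 for every i with H_i(z̄) = 0; and the directional derivative of z ↦ ⟨G(z), H(z)⟩ at z̄ in direction d is strictly negative. In particular, the Mangasarian–Fromovitz constraint qualification is violated at every point satisfying G ≥ 0, H ≥ 0, GᵀH ≤ 0. -/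
open scoped RealInnerProductSpace

noncomputable section

/-- At any feasible point of the inequality reformulation
`G ≥ 0, H ≥ 0, ⟨G,H⟩ ≤ 0` of the complementarity system, one has `⟨G,H⟩ = 0`,
componentwise complementarity, and there is no direction strictly decreasing all
active constraints simultaneously; hence the Mangasarian–Fromovitz constraint
qualification fails at every feasible point. -/
theorem mfcq_fails_for_complementarity (d l : ℕ) (G H : V d → V l) (z : V d)
    (hG : ∀ i, DifferentiableAt ℝ (fun y => G y i) z)
    (hH : ∀ i, DifferentiableAt ℝ (fun y => H y i) z)
    (hGpos : ∀ i, 0 ≤ G z i) (hHpos : ∀ i, 0 ≤ H z i)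
    (hGH : ⟪G z, H z⟫ ≤ 0) :
    ⟪G z, H z⟫ = 0 ∧ (∀ i, G z i * H z i = 0) ∧
    ¬ ∃ dvec : V d,
        (∀ i, G z i = 0 → 0 < ⟪gradient (fun y => G y i) z, dvec⟫) ∧
        (∀ i, H z i = 0 → 0 < ⟪gradient (fun y => H y i) z, dvec⟫) ∧
        (∑ i, (H z i * ⟪gradient (fun y => G y i) z, dvec⟫ +
               G z i * ⟪gradient (fun y => H y i) z, dvec⟫)) < 0 := by
  have hinner : ⟪G z, H z⟫ = ∑ i, G z i * H z i := by
    simp [PiLp.inner_apply, RCLike.inner_apply, mul_comm]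
  have hterm : ∀ i, 0 ≤ G z i * H z i := fun i => mul_nonneg (hGpos i) (hHpos i)
  have hsum0 : ∑ i, G z i * H z i = 0 :=
    le_antisymm (hinner ▸ hGH) (Finset.sum_nonneg fun i _ => hterm i)
  have hcomp : ∀ i, G z i * H z i = 0 := by
    intro i
    have := (Finset.sum_eq_zero_iff_of_nonneg (fun i _ => hterm i)).mp hsum0 i (Finset.mem_univ i)
    exact this
  refine ⟨by rw [hinner]; exact hsum0, hcomp, ?_⟩
  rintro ⟨dvec, h1, h2, h3⟩
  have : 0 ≤ ∑ i, (H z i * ⟪gradient (fun y => G y i) z, dvec⟫ +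
               G z i * ⟪gradient (fun y => H y i) z, dvec⟫) := by
    apply Finset.sum_nonneg
    intro i _
    rcases mul_eq_zero.mp (hcomp i) with hg | hh
    · have := h1 i hg
      rw [hg]
      have : 0 ≤ H z i * ⟪gradient (fun y => G y i) z, dvec⟫ :=
        mul_nonneg (hHpos i) (h1 i hg).le
      linarith
    · have : 0 ≤ G z i * ⟪gradient (fun y => H y i) z, dvec⟫ :=
        mul_nonneg (hGpos i) (h2 i hh).le
      rw [hh]
      linarith
  linarith

end
end

section
/- Let g : ℝ^m → ℝ^k have convex differentiable components, let K := {u ∈ ℝ^m : g(u) ≤ 0}, and assume Slater's condition: there exists û with g(û) < 0 (componentwise). Let u ∈ K and w ∈ ℝ^m. Then ⟨u' − u, w⟩ ≥ 0 for every u' ∈ K if and only if there exists λ ∈ ℝ^k such that w + ∇g(u)λ = 0, λ ≥ 0, g(u) ≤ 0, and ⟨λ, g(u)⟩ = 0 (i.e., 0 ≤ λ ⊥ −g(u) ≥ 0). -/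
open scoped RealInnerProductSpace

noncomputable section

/-!
Sufficiency is the first-order inequality `⟪∇gᵢ(u), u' - u⟫ ≤ gᵢ(u') - gᵢ(u)` of convex
functions, weighted by `λᵢ ≥ 0` and summed. For necessity, the Slater point gives a direction
`u₀ - u` along which every active constraint strictly decreases. Perturbing a direction `d` of the
linearized cone `{d | ⟪∇gᵢ(u), d⟫ ≤ 0 for active i}` towards it yields a direction that is feasible
for small steps, so the variational inequality and a limit give `⟪d, w⟫ ≥ 0`. Thus `-w` lies in
the polar of the linearized cone, and Farkas' lemma (proved by eliminating one generator at a time)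
writes it as a nonnegative combination of the active gradients.
-/

open Filter Topology Finset Function

section FirstOrder

variable {E : Type*} [NormedAddCommGroup E] [NormedSpace ℝ E]

theorem ConvexOn.apply_sub_le_of_hasFDerivAt {s : Set E} {f : E → ℝ} {f' : E →L[ℝ] ℝ} {x y : E}
    (hf : ConvexOn ℝ s f) (hx : x ∈ s) (hy : y ∈ s) (hf' : HasFDerivAt f f' x) :
    f' (y - x) ≤ f y - f x := by
  let ℓ : ℝ →ᵃ[ℝ] E := AffineMap.lineMap x y
  have hline : ConvexOn ℝ (ℓ ⁻¹' s) (f ∘ ℓ) := hf.comp_affineMap ℓ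
  have hderiv : HasDerivAt (f ∘ ℓ) (f' (y - x)) 0 :=
    (by simpa [ℓ] using hf' : HasFDerivAt f f' (ℓ 0)).comp_hasDerivAt 0
      AffineMap.hasDerivAt_lineMap
  simpa [slope_def_field, ℓ] using
    hline.le_slope_of_hasDerivAt (by simpa [ℓ]) (by simpa [ℓ]) one_pos hderiv

theorem HasDerivAt.eventually_nhdsGT_lt_of_neg {φ : ℝ → ℝ} {φ' x : ℝ} (h : HasDerivAt φ φ' x)
    (hφ' : φ' < 0) : ∀ᶠ t in 𝓝[>] x, φ t < φ x := by
  filter_upwards [(hasDerivAt_iff_tendsto_slope_left_right.1 h).2.eventually (gt_mem_nhds hφ'),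
    self_mem_nhdsWithin] with t hslope (ht : x < t)
  have hsub : (t - x) * slope φ x t = φ t - φ x := sub_smul_slope φ x t
  nlinarith [mul_neg_of_pos_of_neg (sub_pos.2 ht) hslope]

theorem eventually_nhdsGT_apply_add_smul_nonpos {f : E → ℝ} {x d : E}
    (hf : DifferentiableAt ℝ f x) (hx : f x ≤ 0) (hd : f x = 0 → fderiv ℝ f x d < 0) :
    ∀ᶠ t in 𝓝[>] (0 : ℝ), f (x + t • d) ≤ 0 := by
  rcases hx.lt_or_eq with hlt | heq
  · have hcont : ContinuousAt (fun t : ℝ => f (x + t • d)) 0 :=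
      hf.continuousAt.comp_of_eq (by fun_prop) (by simp)
    exact nhdsWithin_le_nhds <|
      (hcont.eventually_lt continuousAt_const (by simpa using hlt)).mono fun _ => le_of_lt
  · filter_upwards [HasDerivAt.eventually_nhdsGT_lt_of_neg
      (hf.hasFDerivAt.hasLineDerivAt d) (hd heq)] with t ht
    simpa [heq] using ht.le

end FirstOrder

section Farkas

variable {E : Type*} [NormedAddCommGroup E] [InnerProductSpace ℝ E]

theorem inner_sub_div_smul_eq (x c d e : E) :
    ⟪x - (⟪x, d⟫ / ⟪c, d⟫) • c, e⟫ = ⟪x, e - (⟪c, e⟫ / ⟪c, d⟫) • d⟫ := by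
  simp only [inner_sub_left, inner_sub_right, real_inner_smul_left, real_inner_smul_right]
  ring

theorem Finset.sum_insert_update_smul {ι : Type*} [DecidableEq ι] {s : Finset ι} {j : ι}
    (hj : j ∉ s) (μ : ι → ℝ) (κ : ℝ) (a : ι → E) :
    ∑ i ∈ insert j s, update μ j κ i • a i = κ • a j + ∑ i ∈ s, μ i • a i := by
  rw [sum_insert hj, update_self]
  congr 1
  exact sum_congr rfl fun i hi => by rw [update_of_ne (ne_of_mem_of_not_mem hi hj)]

theorem exists_nonneg_coeffs_of_forall_inner_nonpos {ι : Type*} [DecidableEq ι] (s : Finset ι)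
    (a : ι → E) (b : E) (h : ∀ d, (∀ i ∈ s, ⟪a i, d⟫ ≤ 0) → ⟪b, d⟫ ≤ 0) :
    ∃ μ : ι → ℝ, (∀ i, 0 ≤ μ i) ∧ b = ∑ i ∈ s, μ i • a i := by
  induction s using Finset.induction_on generalizing a b with
  | empty =>
    refine ⟨0, fun _ => le_rfl, ?_⟩
    simpa using real_inner_self_nonpos.1 (h b (by simp))
  | insert j s hj ih =>
    by_cases hs : ∀ d, (∀ i ∈ s, ⟪a i, d⟫ ≤ 0) → ⟪b, d⟫ ≤ 0
    · obtain ⟨μ, hμ, hb⟩ := ih a b hs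
      refine ⟨update μ j 0, fun i => ?_, by rw [sum_insert_update_smul hj, hb, zero_smul, zero_add]⟩
      rcases eq_or_ne i j with rfl | hi
      · simp
      · simp [update_of_ne hi, hμ i]
    push Not at hs
    obtain ⟨d, hd, hbd⟩ := hs
    set c := a j
    have hcd : 0 < ⟪c, d⟫ := by
      by_contra! hcd
      exact hbd.not_ge (h d ((forall_mem_insert _ _ _).2 ⟨hcd, hd⟩))
    set r : E → ℝ := fun x => ⟪x, d⟫ / ⟪c, d⟫
    -- the projection onto `d⟂` along `c` kills the generator `c` and preserves the hypothesis
    obtain ⟨μ, hμ, hPb⟩ := ih (fun i => a i - r (a i) • c) (b - r b • c) fun e he => by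
      have hce : ⟪c, e - (⟪c, e⟫ / ⟪c, d⟫) • d⟫ = 0 := by
        rw [inner_sub_right, real_inner_smul_right, div_mul_cancel₀ _ hcd.ne', sub_self]
      rw [inner_sub_div_smul_eq]
      refine h _ ((forall_mem_insert _ _ _).2 ⟨hce.le, fun i hi => ?_⟩)
      rw [← inner_sub_div_smul_eq]
      exact he i hi
    have hr : ∀ i ∈ s, r (a i) ≤ 0 := fun i hi => div_nonpos_of_nonpos_of_nonneg (hd i hi) hcd.le
    refine ⟨update μ j (r b - ∑ i ∈ s, μ i * r (a i)), fun i => ?_, ?_⟩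
    · rcases eq_or_ne i j with rfl | hi
      · simp only [update_self, sub_nonneg]
        exact (sum_nonpos fun i hi => mul_nonpos_of_nonneg_of_nonpos (hμ i) (hr i hi)).trans
          (div_pos hbd hcd).le
      · simp [update_of_ne hi, hμ i]
    · rw [sum_insert_update_smul hj]
      simp only [smul_sub, sum_sub_distrib, smul_smul, ← sum_smul] at hPb
      linear_combination (norm := module) hPb

end Farkas

section KKT

variable {E : Type*} [NormedAddCommGroup E] [InnerProductSpace ℝ E] {ι : Type*}
  {f : ι → E → ℝ} {x w : E}

theorem ConvexOn.inner_gradient_le_sub [CompleteSpace E] {s : Set E} {g : E → ℝ} {y : E}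
    (hg : ConvexOn ℝ s g) (hx : x ∈ s) (hy : y ∈ s) (hd : DifferentiableAt ℝ g x) :
    ⟪gradient g x, y - x⟫ ≤ g y - g x := by
  rw [inner_gradient_left]
  exact hg.apply_sub_le_of_hasFDerivAt hx hy hd.hasFDerivAt

theorem inner_nonneg_of_forall_fderiv_neg [Finite ι] {d : E}
    (hf : ∀ i, DifferentiableAt ℝ (f i) x) (hx : ∀ i, f i x ≤ 0)
    (hmin : ∀ y, (∀ i, f i y ≤ 0) → 0 ≤ ⟪y - x, w⟫)
    (hd : ∀ i, f i x = 0 → fderiv ℝ (f i) x d < 0) : 0 ≤ ⟪d, w⟫ := by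
  obtain ⟨t, hfeas, ht⟩ := ((eventually_all.2 fun i =>
    eventually_nhdsGT_apply_add_smul_nonpos (hf i) (hx i) (hd i)).and self_mem_nhdsWithin).exists
  have hmin_t := hmin _ hfeas
  rw [add_sub_cancel_left, real_inner_smul_left] at hmin_t
  exact nonneg_of_mul_nonneg_right hmin_t ht

theorem inner_nonneg_of_forall_fderiv_nonpos [Finite ι] {d₀ d : E}
    (hf : ∀ i, DifferentiableAt ℝ (f i) x) (hx : ∀ i, f i x ≤ 0)
    (hmin : ∀ y, (∀ i, f i y ≤ 0) → 0 ≤ ⟪y - x, w⟫)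
    (hd₀ : ∀ i, f i x = 0 → fderiv ℝ (f i) x d₀ < 0)
    (hd : ∀ i, f i x = 0 → fderiv ℝ (f i) x d ≤ 0) : 0 ≤ ⟪d, w⟫ := by
  have hperturb : ∀ ε > (0 : ℝ), 0 ≤ ⟪d + ε • d₀, w⟫ := fun ε hε =>
    inner_nonneg_of_forall_fderiv_neg hf hx hmin fun i hi => by
      rw [map_add, map_smul, smul_eq_mul]
      nlinarith [hd i hi, hd₀ i hi]
  have hlim : Tendsto (fun ε : ℝ => ⟪d + ε • d₀, w⟫) (𝓝[>] 0) (𝓝 ⟪d, w⟫) := by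
    have hcont : Continuous (fun ε : ℝ => ⟪d + ε • d₀, w⟫) := by fun_prop
    simpa using (hcont.tendsto 0).mono_left nhdsWithin_le_nhds
  exact ge_of_tendsto hlim (eventually_nhdsWithin_of_forall hperturb)

theorem exists_kkt_multipliers [Fintype ι] [CompleteSpace E]
    (hconv : ∀ i, ConvexOn ℝ Set.univ (f i)) (hdiff : ∀ i, DifferentiableAt ℝ (f i) x)
    (hslater : ∃ x₀, ∀ i, f i x₀ < 0) (hx : ∀ i, f i x ≤ 0)
    (hmin : ∀ y, (∀ i, f i y ≤ 0) → 0 ≤ ⟪y - x, w⟫) :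
    ∃ lam : ι → ℝ,
      w + ∑ i, lam i • gradient (f i) x = 0 ∧ (∀ i, 0 ≤ lam i) ∧ ∀ i, lam i * f i x = 0 := by
  classical
  obtain ⟨x₀, hx₀⟩ := hslater
  have hcone : ∀ d, (∀ i, f i x = 0 → ⟪gradient (f i) x, d⟫ ≤ 0) → ⟪-w, d⟫ ≤ 0 := by
    intro d hd
    have hwd := inner_nonneg_of_forall_fderiv_nonpos hdiff hx hmin (d₀ := x₀ - x)
      (fun i hi => by
        rw [← inner_gradient_left]
        linarith [(hconv i).inner_gradient_le_sub trivial trivial (hdiff i) (y := x₀), hx₀ i])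
      (fun i hi => by rw [← inner_gradient_left]; exact hd i hi)
    rw [inner_neg_left, real_inner_comm]
    linarith
  -- inactive constraints get the zero generator, and then a zero multiplier
  obtain ⟨μ, hμ, hw⟩ := exists_nonneg_coeffs_of_forall_inner_nonpos univ
    (fun i => if f i x = 0 then gradient (f i) x else 0) (-w)
    fun d hd => hcone d fun i hi => by simpa [hi] using hd i (mem_univ i)
  refine ⟨fun i => if f i x = 0 then μ i else 0, ?_, fun i => ?_, fun i => ?_⟩
  · simp only [smul_ite, smul_zero, ite_smul, zero_smul] at hw ⊢
    rw [← hw, add_neg_cancel]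
  · by_cases hi : f i x = 0 <;> simp [hi, hμ i]
  · by_cases hi : f i x = 0 <;> simp [hi]

theorem inner_nonneg_of_kkt [Fintype ι] [CompleteSpace E] {s : Set E} {lam : ι → ℝ} {y : E}
    (hconv : ∀ i, ConvexOn ℝ s (f i)) (hdiff : ∀ i, DifferentiableAt ℝ (f i) x) (hx : x ∈ s)
    (hw : w + ∑ i, lam i • gradient (f i) x = 0) (hlam : ∀ i, 0 ≤ lam i)
    (hcompl : ∑ i, lam i * f i x = 0) (hy : y ∈ s) (hfy : ∀ i, f i y ≤ 0) :
    0 ≤ ⟪y - x, w⟫ :=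
  calc 0 ≤ -∑ i, lam i * f i y :=
        neg_nonneg.2 (sum_nonpos fun i _ => mul_nonpos_of_nonneg_of_nonpos (hlam i) (hfy i))
    _ = -∑ i, lam i * (f i y - f i x) := by simp [mul_sub, sum_sub_distrib, hcompl]
    _ ≤ -∑ i, lam i * ⟪gradient (f i) x, y - x⟫ := neg_le_neg <| sum_le_sum fun i _ =>
        mul_le_mul_of_nonneg_left ((hconv i).inner_gradient_le_sub hx hy (hdiff i)) (hlam i)
    _ = ⟪y - x, w⟫ := by
        rw [eq_neg_of_add_eq_zero_left hw, inner_neg_right, inner_sum]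
        exact congrArg _ (sum_congr rfl fun i _ => by rw [real_inner_smul_right, real_inner_comm])

end KKT

/-- For `K = {u : g(u) ≤ 0}` with convex differentiable components
of `g` and Slater's condition, `u ∈ K` solves the variational inequality with operator
value `w` iff the KKT/complementarity system holds: there is `λ ≥ 0` with
`w + ∇g(u)λ = 0` and `0 ≤ λ ⊥ -g(u) ≥ 0`. -/
theorem vi_iff_kkt_complementarity (m k : ℕ) (g : V m → V k)
    (hconv : ∀ i, ConvexOn ℝ Set.univ (fun v => g v i))
    (hdiff : ∀ i, Differentiable ℝ (fun v => g v i))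
    (hslater : ∃ u₀ : V m, ∀ i, g u₀ i < 0)
    (u : V m) (hu : ∀ i, g u i ≤ 0) (w : V m) :
    (∀ u' : V m, (∀ i, g u' i ≤ 0) → 0 ≤ ⟪u' - u, w⟫) ↔
    ∃ lam : V k,
      w + ∑ i, lam i • gradient (fun v => g v i) u = 0 ∧
      (∀ i, 0 ≤ lam i) ∧ (∀ i, g u i ≤ 0) ∧ ⟪lam, g u⟫ = 0 := by
  have hinner : ∀ lam : V k, ⟪lam, g u⟫ = ∑ i, lam i * g u i := fun lam => by
    simp [PiLp.inner_apply, mul_comm]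
  constructor
  · intro hvi
    obtain ⟨lam, hw, hlam, hcompl⟩ := exists_kkt_multipliers (f := fun i v => g v i) hconv
      (fun i => hdiff i u) hslater hu hvi
    exact ⟨WithLp.toLp 2 lam, hw, hlam, hu, by simp [hinner, hcompl]⟩
  · rintro ⟨lam, hw, hlam, -, hcompl⟩ u' hu'
    exact inner_nonneg_of_kkt (s := Set.univ) hconv (fun i => hdiff i u) trivial hw hlam
      (by rwa [← hinner]) trivial hu'
end
end
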